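/- Under the stated hypotheses, let H : (−ε,ε) × (a,b) → ℝⁿ be a smooth variation with (H(s,t), ∂H/∂t(s,t)) ∈ W for all (s,t), such that every curve t ↦ H(s,t) is a magnetic geodesic: ∂²H^i/∂t² + 2G^i(H, ∂H/∂t) = Y^i_j(H, ∂H/∂t) ∂H^j/∂t. Set T := ∂H/∂t, U := ∂H/∂s, and for a smooth vector field V(s,t) along the variation define the covariant derivative (D_T V)^i := ∂V^i/∂t + N^i_l(H,T) V^l. Then the magnetic Jacobi equation holds at every (s,t) (all coefficient functions evaluated at (H,T), summing over repeated indices): (D_T D_T U)^i = −R^i_k U^k + Y^i_j (D_T U)^j + U^k Y^i_{j|k} T^j + (D_T U)^l (∂Y^i_j/∂y^l) T^j + L^i_{jk} U^j Y^k_m T^m. -/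

import Mathlib

noncomputable section

/-- A point of the local chart `W ⊆ ℝⁿ × (ℝⁿ ∖ {0})` of `TM ∖ {0}`. -/
abbrev Pt (n : ℕ) := (Fin n → ℝ) × (Fin n → ℝ)

/-- Partial derivative in the `k`-th base (`x`) direction. -/
def pdx {n : ℕ} (k : Fin n) (f : Pt n → ℝ) (z : Pt n) : ℝ :=
  fderiv ℝ f z (Pi.single k 1, 0)

/-- Partial derivative in the `k`-th fibre (`y`) direction. -/
def pdy {n : ℕ} (k : Fin n) (f : Pt n → ℝ) (z : Pt n) : ℝ :=
  fderiv ℝ f z (0, Pi.single k 1)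

/-- The Riemann curvature of the spray:
`R^i_k := 2∂G^i/∂x^k − y^j ∂²G^i/∂x^j∂y^k + 2G^j ∂²G^i/∂y^j∂y^k
  − (∂G^i/∂y^j)(∂G^j/∂y^k)`. -/
def Rspray {n : ℕ} (G : Fin n → Pt n → ℝ) (i k : Fin n) (z : Pt n) : ℝ :=
  2 * pdx k (G i) z - (∑ j, z.2 j * pdx j (pdy k (G i)) z)
    + (2 * ∑ j, G j z * pdy j (pdy k (G i)) z)
    - ∑ j, pdy j (G i) z * pdy k (G j) z

/-- `L^i_{jk} := ∂²G^i/∂y^j∂y^k − Γ^i_{jk}`. -/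
def Lspray {n : ℕ} (G : Fin n → Pt n → ℝ) (Γ : Fin n → Fin n → Fin n → Pt n → ℝ)
    (i j k : Fin n) (z : Pt n) : ℝ :=
  pdy j (pdy k (G i)) z - Γ i j k z

/-- `Y^i_{j|k} := ∂Y^i_j/∂x^k − N^p_k ∂Y^i_j/∂y^p + Γ^i_{kp}Y^p_j − Γ^p_{kj}Y^i_p`,
with `N^p_k = ∂G^p/∂y^k`. -/
def Ydh {n : ℕ} (G : Fin n → Pt n → ℝ) (Γ : Fin n → Fin n → Fin n → Pt n → ℝ)
    (Y : Fin n → Fin n → Pt n → ℝ) (i j k : Fin n) (z : Pt n) : ℝ :=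
  pdx k (Y i j) z - (∑ p, pdy k (G p) z * pdy p (Y i j) z)
    + (∑ p, Γ i k p z * Y p j z) - ∑ p, Γ p k j z * Y i p z

/-- `T := ∂H/∂t` of a variation `H(s,t)`. -/
def Tt {n : ℕ} (H : ℝ × ℝ → Fin n → ℝ) (i : Fin n) (p : ℝ × ℝ) : ℝ :=
  deriv (fun τ => H (p.1, τ) i) p.2

/-- `U := ∂H/∂s` of a variation `H(s,t)`. -/
def Us {n : ℕ} (H : ℝ × ℝ → Fin n → ℝ) (i : Fin n) (p : ℝ × ℝ) : ℝ :=
  deriv (fun σ => H (σ, p.2) i) p.1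

/-- The lift `(H, ∂H/∂t)` of the variation to `TM`. -/
def PP {n : ℕ} (H : ℝ × ℝ → Fin n → ℝ) (p : ℝ × ℝ) : Pt n :=
  (H p, fun i => Tt H i p)

/-- Covariant derivative along `t ↦ H(s,t)`:
`(D_T V)^i := ∂V^i/∂t + N^i_l(H,T) V^l`, with `N^i_l = ∂G^i/∂y^l`. -/
def DT {n : ℕ} (G : Fin n → Pt n → ℝ) (H : ℝ × ℝ → Fin n → ℝ)
    (V : Fin n → ℝ × ℝ → ℝ) (i : Fin n) (p : ℝ × ℝ) : ℝ :=
  deriv (fun τ => V i (p.1, τ)) p.2 + ∑ l, pdy l (G i) (PP H p) * V l p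

open Filter Topology Finset

/-! Differentiating the magnetic geodesic equation `∂ₜT = Y T − 2G` in the transverse direction
gives `∂ₜ∂ₜU = ∂ₛ∂ₜT = ∂ₛ(Y T − 2G)`, because mixed partials of `H` commute (`∂ₜU = ∂ₛT`).
The chain rule expands the right-hand side through `U`, `∂ₛT` and the `x`- and `y`-derivatives of
`G` and `Y`; substituting `∂ₛT = D_T U − N U` then yields the covariant form. The `Γ`-terms of
`Y_{j|k}` and of `L` cancel each other by `Γ^i_{jk} y^k = N^i_j`. -/

section SecondDerivative

variable {E F : Type*} [NormedAddCommGroup E] [NormedSpace ℝ E]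
  [NormedAddCommGroup F] [NormedSpace ℝ F] {f : E → F}

theorem ContDiffOn.differentiableAt_of_isOpen {s : Set E} (hs : IsOpen s)
    (hf : ContDiffOn ℝ (⊤ : ℕ∞) f s) {x : E} (hx : x ∈ s) : DifferentiableAt ℝ f x :=
  (hf.differentiableOn (by simp)).differentiableAt (hs.mem_nhds hx)

theorem ContDiffAt.fderiv_apply_comm {x : E} (hf : ContDiffAt ℝ 2 f x) (v w : E) :
    fderiv ℝ (fun y => fderiv ℝ f y v) x w = fderiv ℝ (fun y => fderiv ℝ f y w) x v := by
  have hd : DifferentiableAt ℝ (fderiv ℝ f) x :=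
    (hf.fderiv_right (m := 1) le_rfl).differentiableAt one_ne_zero
  have hsnd : ∀ v w, fderiv ℝ (fun y => fderiv ℝ f y v) x w = fderiv ℝ (fderiv ℝ f) x w v := by
    intro v w
    rw [fderiv_clm_apply hd (differentiableAt_const v)]
    simp
  rw [hsnd, hsnd]
  exact hf.isSymmSndFDerivAt (by simp) w v

end SecondDerivative

section PartialDeriv

variable {F : Type*} [NormedAddCommGroup F] [NormedSpace ℝ F]

def derivS (f : ℝ × ℝ → F) (q : ℝ × ℝ) : F := deriv (fun σ => f (σ, q.2)) q.1

def derivT (f : ℝ × ℝ → F) (q : ℝ × ℝ) : F := deriv (fun τ => f (q.1, τ)) q.2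

variable {f g : ℝ × ℝ → F} {q : ℝ × ℝ}

theorem HasFDerivAt.hasDerivAt_derivS {L : ℝ × ℝ →L[ℝ] F} (hf : HasFDerivAt f L q) :
    HasDerivAt (fun σ => f (σ, q.2)) (L (1, 0)) q.1 :=
  hf.comp_hasDerivAt q.1 ((hasDerivAt_id _).prodMk (hasDerivAt_const _ _))

theorem HasFDerivAt.hasDerivAt_derivT {L : ℝ × ℝ →L[ℝ] F} (hf : HasFDerivAt f L q) :
    HasDerivAt (fun τ => f (q.1, τ)) (L (0, 1)) q.2 :=
  hf.comp_hasDerivAt q.2 ((hasDerivAt_const _ _).prodMk (hasDerivAt_id _))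

theorem DifferentiableAt.hasDerivAt_derivS (hf : DifferentiableAt ℝ f q) :
    HasDerivAt (fun σ => f (σ, q.2)) (derivS f q) q.1 :=
  hf.hasFDerivAt.hasDerivAt_derivS.differentiableAt.hasDerivAt

theorem DifferentiableAt.hasDerivAt_derivT (hf : DifferentiableAt ℝ f q) :
    HasDerivAt (fun τ => f (q.1, τ)) (derivT f q) q.2 :=
  hf.hasFDerivAt.hasDerivAt_derivT.differentiableAt.hasDerivAt

theorem DifferentiableAt.derivS_eq (hf : DifferentiableAt ℝ f q) :
    derivS f q = fderiv ℝ f q (1, 0) :=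
  hf.hasFDerivAt.hasDerivAt_derivS.deriv

theorem DifferentiableAt.derivT_eq (hf : DifferentiableAt ℝ f q) :
    derivT f q = fderiv ℝ f q (0, 1) :=
  hf.hasFDerivAt.hasDerivAt_derivT.deriv

variable {P : Set (ℝ × ℝ)}

theorem IsOpen.eventually_mk_snd_mem (hP : IsOpen P) (hq : q ∈ P) :
    ∀ᶠ σ in 𝓝 q.1, (σ, q.2) ∈ P :=
  (continuous_id.prodMk continuous_const).continuousAt.preimage_mem_nhds (hP.mem_nhds hq)

theorem IsOpen.eventually_mk_fst_mem (hP : IsOpen P) (hq : q ∈ P) :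
    ∀ᶠ τ in 𝓝 q.2, (q.1, τ) ∈ P :=
  (continuous_const.prodMk continuous_id).continuousAt.preimage_mem_nhds (hP.mem_nhds hq)

theorem derivS_congr_of_eqOn (hP : IsOpen P) (h : Set.EqOn f g P) (hq : q ∈ P) :
    derivS f q = derivS g q :=
  EventuallyEq.deriv_eq (by filter_upwards [hP.eventually_mk_snd_mem hq] with σ hσ using h hσ)

theorem derivT_congr_of_eqOn (hP : IsOpen P) (h : Set.EqOn f g P) (hq : q ∈ P) :
    derivT f q = derivT g q :=
  EventuallyEq.deriv_eq (by filter_upwards [hP.eventually_mk_fst_mem hq] with τ hτ using h hτ)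

theorem ContDiffOn.derivS (hP : IsOpen P) (hf : ContDiffOn ℝ (⊤ : ℕ∞) f P) :
    ContDiffOn ℝ (⊤ : ℕ∞) (derivS f) P :=
  ((hf.fderiv_of_isOpen hP (by norm_cast)).clm_apply contDiffOn_const).congr
    fun _ hq => (hf.differentiableAt_of_isOpen hP hq).derivS_eq

theorem ContDiffOn.derivT (hP : IsOpen P) (hf : ContDiffOn ℝ (⊤ : ℕ∞) f P) :
    ContDiffOn ℝ (⊤ : ℕ∞) (derivT f) P :=
  ((hf.fderiv_of_isOpen hP (by norm_cast)).clm_apply contDiffOn_const).congr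
    fun _ hq => (hf.differentiableAt_of_isOpen hP hq).derivT_eq

theorem derivT_derivS (hP : IsOpen P) (hf : ContDiffOn ℝ (⊤ : ℕ∞) f P) (hq : q ∈ P) :
    derivT (derivS f) q = derivS (derivT f) q := by
  have hf' : ContDiffAt ℝ 2 f q := (hf.contDiffAt (hP.mem_nhds hq)).of_le (by norm_cast)
  have hd : DifferentiableAt ℝ (fderiv ℝ f) q :=
    (hf'.fderiv_right (m := 1) le_rfl).differentiableAt one_ne_zero
  rw [derivT_congr_of_eqOn hP (fun r hr => (hf.differentiableAt_of_isOpen hP hr).derivS_eq) hq,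
    derivS_congr_of_eqOn hP (fun r hr => (hf.differentiableAt_of_isOpen hP hr).derivT_eq) hq,
    (hd.clm_apply (differentiableAt_const _)).derivT_eq,
    (hd.clm_apply (differentiableAt_const _)).derivS_eq]
  exact hf'.fderiv_apply_comm _ _

end PartialDeriv

section PointDerivatives

variable {n : ℕ}

theorem ContinuousLinearMap.apply_pair_eq_sum (L : Pt n →L[ℝ] ℝ) (u v : Fin n → ℝ) :
    L (u, v) = ∑ k, u k * L (Pi.single k 1, 0) + ∑ k, v k * L (0, Pi.single k 1) := by
  have huv : ((u, v) : Pt n)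
      = ∑ k, u k • ((Pi.single k 1, 0) : Pt n) + ∑ k, v k • ((0, Pi.single k 1) : Pt n) := by
    ext1 <;> simp [Prod.fst_sum, Prod.snd_sum, ← Pi.single_smul, Finset.univ_sum_single]
  rw [huv, map_add, map_sum, map_sum]
  simp only [map_smul, smul_eq_mul]

theorem hasDerivAt_comp_eq_sum_pdx_add_sum_pdy {f : Pt n → ℝ} {γ : ℝ → Pt n} {u v : Fin n → ℝ}
    {t : ℝ} (hf : DifferentiableAt ℝ f (γ t)) (hγ : HasDerivAt γ (u, v) t) :
    HasDerivAt (fun τ => f (γ τ)) (∑ k, u k * pdx k f (γ t) + ∑ k, v k * pdy k f (γ t)) t := by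
  have h := hf.hasFDerivAt.comp_hasDerivAt t hγ
  rwa [ContinuousLinearMap.apply_pair_eq_sum] at h

theorem ContDiffOn.pdy {f : Pt n → ℝ} {W : Set (Pt n)} (hW : IsOpen W)
    (hf : ContDiffOn ℝ (⊤ : ℕ∞) f W) (k : Fin n) : ContDiffOn ℝ (⊤ : ℕ∞) (pdy k f) W :=
  (hf.fderiv_of_isOpen hW (by norm_cast)).clm_apply contDiffOn_const

theorem ContDiffAt.pdy_pdy_comm {f : Pt n → ℝ} {z : Pt n} (hf : ContDiffAt ℝ 2 f z) (j k : Fin n) :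
    pdy j (pdy k f) z = pdy k (pdy j f) z :=
  hf.fderiv_apply_comm _ _

end PointDerivatives

structure IsMagneticVariation {n : ℕ} (W : Set (Pt n)) (G : Fin n → Pt n → ℝ)
    (Y : Fin n → Fin n → Pt n → ℝ) (P : Set (ℝ × ℝ)) (H : ℝ × ℝ → Fin n → ℝ) : Prop where
  isOpen_W : IsOpen W
  isOpen_P : IsOpen P
  contDiffOn_G : ∀ i, ContDiffOn ℝ (⊤ : ℕ∞) (G i) W
  contDiffOn_Y : ∀ i j, ContDiffOn ℝ (⊤ : ℕ∞) (Y i j) W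
  contDiffOn_H : ContDiffOn ℝ (⊤ : ℕ∞) H P
  mapsTo_PP : Set.MapsTo (PP H) P W
  magnetic_geodesic : ∀ p ∈ P, ∀ i,
    derivT (Tt H i) p + 2 * G i (PP H p) = ∑ j, Y i j (PP H p) * Tt H j p

namespace IsMagneticVariation

variable {n : ℕ} {W : Set (Pt n)} {G : Fin n → Pt n → ℝ} {Y : Fin n → Fin n → Pt n → ℝ}
  {P : Set (ℝ × ℝ)} {H : ℝ × ℝ → Fin n → ℝ} {q : ℝ × ℝ}

theorem contDiffOn_coord (hV : IsMagneticVariation W G Y P H) (k : Fin n) :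
    ContDiffOn ℝ (⊤ : ℕ∞) (fun q => H q k) P :=
  contDiffOn_pi.1 hV.contDiffOn_H k

theorem contDiffOn_Tt (hV : IsMagneticVariation W G Y P H) (k : Fin n) :
    ContDiffOn ℝ (⊤ : ℕ∞) (Tt H k) P :=
  (hV.contDiffOn_coord k).derivT hV.isOpen_P

theorem contDiffOn_Us (hV : IsMagneticVariation W G Y P H) (k : Fin n) :
    ContDiffOn ℝ (⊤ : ℕ∞) (Us H k) P :=
  (hV.contDiffOn_coord k).derivS hV.isOpen_P

theorem derivT_Tt (hV : IsMagneticVariation W G Y P H) (hq : q ∈ P) (i : Fin n) :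
    derivT (Tt H i) q = ∑ j, Y i j (PP H q) * Tt H j q - 2 * G i (PP H q) :=
  eq_sub_of_add_eq (hV.magnetic_geodesic q hq i)

theorem derivT_Us (hV : IsMagneticVariation W G Y P H) (hq : q ∈ P) (k : Fin n) :
    derivT (Us H k) q = derivS (Tt H k) q :=
  derivT_derivS hV.isOpen_P (hV.contDiffOn_coord k) hq

theorem hasDerivAt_PP_t (hV : IsMagneticVariation W G Y P H) (hq : q ∈ P) :
    HasDerivAt (fun τ => PP H (q.1, τ))
      ((fun k => Tt H k q, fun k => derivT (Tt H k) q) : Pt n) q.2 :=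
  (hasDerivAt_pi.2 fun k =>
      ((hV.contDiffOn_coord k).differentiableAt_of_isOpen hV.isOpen_P hq).hasDerivAt_derivT).prodMk
    (hasDerivAt_pi.2 fun k =>
      ((hV.contDiffOn_Tt k).differentiableAt_of_isOpen hV.isOpen_P hq).hasDerivAt_derivT)

theorem hasDerivAt_PP_s (hV : IsMagneticVariation W G Y P H) (hq : q ∈ P) :
    HasDerivAt (fun σ => PP H (σ, q.2))
      ((fun k => Us H k q, fun k => derivS (Tt H k) q) : Pt n) q.1 :=
  (hasDerivAt_pi.2 fun k =>
      ((hV.contDiffOn_coord k).differentiableAt_of_isOpen hV.isOpen_P hq).hasDerivAt_derivS).prodMk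
    (hasDerivAt_pi.2 fun k =>
      ((hV.contDiffOn_Tt k).differentiableAt_of_isOpen hV.isOpen_P hq).hasDerivAt_derivS)

theorem differentiableAt_comp_PP (hV : IsMagneticVariation W G Y P H) {f : Pt n → ℝ}
    (hf : ContDiffOn ℝ (⊤ : ℕ∞) f W) (hq : q ∈ P) : DifferentiableAt ℝ f (PP H q) :=
  hf.differentiableAt_of_isOpen hV.isOpen_W (hV.mapsTo_PP hq)

theorem hasDerivAt_comp_PP_t (hV : IsMagneticVariation W G Y P H) {f : Pt n → ℝ}
    (hf : ContDiffOn ℝ (⊤ : ℕ∞) f W) (hq : q ∈ P) :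
    HasDerivAt (fun τ => f (PP H (q.1, τ)))
      (∑ k, Tt H k q * pdx k f (PP H q) + ∑ k, derivT (Tt H k) q * pdy k f (PP H q)) q.2 :=
  hasDerivAt_comp_eq_sum_pdx_add_sum_pdy (hV.differentiableAt_comp_PP hf hq) (hV.hasDerivAt_PP_t hq)

theorem hasDerivAt_comp_PP_s (hV : IsMagneticVariation W G Y P H) {f : Pt n → ℝ}
    (hf : ContDiffOn ℝ (⊤ : ℕ∞) f W) (hq : q ∈ P) :
    HasDerivAt (fun σ => f (PP H (σ, q.2)))
      (∑ k, Us H k q * pdx k f (PP H q) + ∑ k, derivS (Tt H k) q * pdy k f (PP H q)) q.1 :=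
  hasDerivAt_comp_eq_sum_pdx_add_sum_pdy (hV.differentiableAt_comp_PP hf hq) (hV.hasDerivAt_PP_s hq)

theorem derivT_derivS_Tt (hV : IsMagneticVariation W G Y P H) (hq : q ∈ P) (i : Fin n) :
    derivT (derivS (Tt H i)) q
      = ∑ j, ((∑ k, Us H k q * pdx k (Y i j) (PP H q)
            + ∑ k, derivS (Tt H k) q * pdy k (Y i j) (PP H q)) * Tt H j q
          + Y i j (PP H q) * derivS (Tt H j) q)
        - 2 * (∑ k, Us H k q * pdx k (G i) (PP H q)
            + ∑ k, derivS (Tt H k) q * pdy k (G i) (PP H q)) := by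
  rw [derivT_derivS hV.isOpen_P (hV.contDiffOn_Tt i) hq,
    derivS_congr_of_eqOn hV.isOpen_P (fun r hr => hV.derivT_Tt hr i) hq]
  refine HasDerivAt.deriv (HasDerivAt.sub (HasDerivAt.fun_sum fun j _ => ?_) ?_)
  · exact (hV.hasDerivAt_comp_PP_s (hV.contDiffOn_Y i j) hq).mul
      ((hV.contDiffOn_Tt j).differentiableAt_of_isOpen hV.isOpen_P hq).hasDerivAt_derivS
  · exact (hV.hasDerivAt_comp_PP_s (hV.contDiffOn_G i) hq).const_mul 2

theorem DT_Us (hV : IsMagneticVariation W G Y P H) (hq : q ∈ P) (l : Fin n) :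
    DT G H (Us H) l q = derivS (Tt H l) q + ∑ k, pdy k (G l) (PP H q) * Us H k q := by
  rw [← hV.derivT_Us hq]
  rfl

theorem DT_DT_Us (hV : IsMagneticVariation W G Y P H) (hq : q ∈ P) (i : Fin n) :
    DT G H (DT G H (Us H)) i q
      = derivT (derivS (Tt H i)) q
          + ∑ l, ((∑ k, Tt H k q * pdx k (pdy l (G i)) (PP H q)
              + ∑ k, derivT (Tt H k) q * pdy k (pdy l (G i)) (PP H q)) * Us H l q
            + pdy l (G i) (PP H q) * derivS (Tt H l) q)
        + ∑ l, pdy l (G i) (PP H q) * DT G H (Us H) l q := by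
  have hderiv : HasDerivAt (fun τ => DT G H (Us H) i (q.1, τ))
      (derivT (derivS (Tt H i)) q
        + ∑ l, ((∑ k, Tt H k q * pdx k (pdy l (G i)) (PP H q)
            + ∑ k, derivT (Tt H k) q * pdy k (pdy l (G i)) (PP H q)) * Us H l q
          + pdy l (G i) (PP H q) * derivS (Tt H l) q)) q.2 := by
    have hUs : ∀ l, HasDerivAt (fun τ => Us H l (q.1, τ)) (derivS (Tt H l) q) q.2 := fun l =>
      hV.derivT_Us hq l ▸
        ((hV.contDiffOn_Us l).differentiableAt_of_isOpen hV.isOpen_P hq).hasDerivAt_derivT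
    have hM : HasDerivAt (fun τ => derivS (Tt H i) (q.1, τ)) (derivT (derivS (Tt H i)) q) q.2 :=
      (((hV.contDiffOn_Tt i).derivS hV.isOpen_P).differentiableAt_of_isOpen hV.isOpen_P
        hq).hasDerivAt_derivT
    refine (hM.add (HasDerivAt.fun_sum fun l _ =>
      (hV.hasDerivAt_comp_PP_t ((hV.contDiffOn_G i).pdy hV.isOpen_W l) hq).mul
        (hUs l))).congr_of_eventuallyEq ?_
    filter_upwards [hV.isOpen_P.eventually_mk_fst_mem hq] with τ hτ using hV.DT_Us hτ i
  exact congrArg (· + _) hderiv.deriv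

end IsMagneticVariation

section JacobiAlgebra

/- The values at `(H, T)` are encoded as arrays: `N i k = ∂G^i/∂y^k`, `Gx i k = ∂G^i/∂x^k`,
`Nx i l k = ∂N^i_l/∂x^k`, `Nyy i l k = ∂N^i_l/∂y^k`, `Yx i j k = ∂Y^i_j/∂x^k`,
`Yy i j k = ∂Y^i_j/∂y^k`, `Gv = G`; along the variation `M = ∂ₛT = ∂ₜU`, `V = D_T U`, `A = ∂ₜT`. -/

variable {n : ℕ} (i : Fin n) (T u M V A Gv : Fin n → ℝ) (N Gx Y : Fin n → Fin n → ℝ)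
  (Nx Nyy Yx Yy Γ : Fin n → Fin n → Fin n → ℝ)

theorem lorentz_terms_eq (hΓN : ∀ a b, ∑ k, Γ a b k * T k = N a b)
    (hV : ∀ l, V l = M l + ∑ q, N l q * u q) :
    ∑ j, Y i j * V j
        + ∑ j, ∑ k, u k * (Yx i j k - (∑ p, N p k * Yy i j p) + (∑ p, Γ i k p * Y p j)
            - ∑ p, Γ p k j * Y i p) * T j
        + ∑ j, ∑ l, V l * Yy i j l * T j
        + ∑ j, ∑ k, ∑ m, (Nyy i k j - Γ i j k) * u j * Y k m * T m
      = ∑ j, Y i j * M j + ∑ j, ∑ k, u k * Yx i j k * T j + ∑ j, ∑ l, M l * Yy i j l * T j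
        + ∑ j, ∑ k, ∑ m, Nyy i k j * u j * Y k m * T m := by
  have hYy : ∑ j, ∑ k, u k * (∑ p, N p k * Yy i j p) * T j
      = ∑ j, ∑ l, (∑ q, N l q * u q) * Yy i j l * T j := by
    refine sum_congr rfl fun j _ => ?_
    simp only [mul_sum, sum_mul]
    rw [sum_comm]
    exact sum_congr rfl fun _ _ => sum_congr rfl fun _ _ => by ring
  have hΓY : ∑ j, ∑ k, u k * (∑ p, Γ i k p * Y p j) * T j
      = ∑ j, ∑ k, ∑ m, Γ i j k * u j * Y k m * T m := by
    simp only [mul_sum, sum_mul]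
    rw [← sum_comm_cycle]
    exact sum_congr rfl fun _ _ => sum_congr rfl fun _ _ => sum_congr rfl fun _ _ => by ring
  have hΓN' : ∑ j, ∑ k, u k * (∑ p, Γ p k j * Y i p) * T j
      = ∑ j, Y i j * ∑ q, N j q * u q := by
    simp only [← hΓN, mul_sum, sum_mul]
    rw [sum_comm_cycle]
    refine sum_congr rfl fun _ _ => ?_
    rw [sum_comm]
    exact sum_congr rfl fun _ _ => sum_congr rfl fun _ _ => by ring
  simp only [hV, mul_add, add_mul, mul_sub, sub_mul, sum_add_distrib, sum_sub_distrib]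
  rw [hYy, hΓY, hΓN']
  ring

theorem spray_terms_eq (hNyy : ∀ a b c, Nyy a b c = Nyy a c b)
    (hV : ∀ l, V l = M l + ∑ q, N l q * u q) (hA : ∀ k, A k = ∑ j, Y k j * T j - 2 * Gv k) :
    (∑ j, ((∑ k, u k * Yx i j k + ∑ k, M k * Yy i j k) * T j + Y i j * M j)
          - 2 * (∑ k, u k * Gx i k + ∑ k, M k * N i k))
        + ∑ l, ((∑ k, T k * Nx i l k + ∑ k, A k * Nyy i l k) * u l + N i l * M l)
        + ∑ l, N i l * V l
      = -(∑ k, (2 * Gx i k - (∑ j, T j * Nx i k j) + (2 * ∑ j, Gv j * Nyy i k j)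
            - ∑ j, N i j * N j k) * u k)
        + (∑ j, Y i j * M j + ∑ j, ∑ k, u k * Yx i j k * T j + ∑ j, ∑ l, M l * Yy i j l * T j
          + ∑ j, ∑ k, ∑ m, Nyy i k j * u j * Y k m * T m) := by
  have hNyyY : ∑ l, (∑ k, (∑ j, Y k j * T j) * Nyy i l k) * u l
      = ∑ j, ∑ k, ∑ m, Nyy i k j * u j * Y k m * T m := by
    simp only [sum_mul]
    exact sum_congr rfl fun _ _ => sum_congr rfl fun _ _ => sum_congr rfl fun _ _ => by
      rw [hNyy]; ring
  have hNN : ∑ l, N i l * ∑ q, N l q * u q = ∑ k, (∑ j, N i j * N j k) * u k := by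
    simp only [mul_sum, sum_mul]
    rw [sum_comm]
    exact sum_congr rfl fun _ _ => sum_congr rfl fun _ _ => by ring
  have hGx : ∑ k, u k * Gx i k = ∑ k, Gx i k * u k := sum_congr rfl fun _ _ => mul_comm _ _
  have hMN : ∑ k, M k * N i k = ∑ l, N i l * M l := sum_congr rfl fun _ _ => mul_comm _ _
  simp only [hV, hA, mul_add, add_mul, sub_mul, sum_add_distrib, sum_sub_distrib]
  rw [hNyyY, hNN, hGx, hMN]
  simp only [sum_mul, mul_assoc, ← mul_sum]
  ring

theorem magnetic_jacobi_identity (hNyy : ∀ a b c, Nyy a b c = Nyy a c b)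
    (hΓN : ∀ a b, ∑ k, Γ a b k * T k = N a b) (hV : ∀ l, V l = M l + ∑ q, N l q * u q)
    (hA : ∀ k, A k = ∑ j, Y k j * T j - 2 * Gv k) :
    (∑ j, ((∑ k, u k * Yx i j k + ∑ k, M k * Yy i j k) * T j + Y i j * M j)
          - 2 * (∑ k, u k * Gx i k + ∑ k, M k * N i k))
        + ∑ l, ((∑ k, T k * Nx i l k + ∑ k, A k * Nyy i l k) * u l + N i l * M l)
        + ∑ l, N i l * V l
      = -(∑ k, (2 * Gx i k - (∑ j, T j * Nx i k j) + (2 * ∑ j, Gv j * Nyy i k j)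
            - ∑ j, N i j * N j k) * u k)
        + (∑ j, Y i j * V j)
        + (∑ j, ∑ k, u k * (Yx i j k - (∑ p, N p k * Yy i j p) + (∑ p, Γ i k p * Y p j)
            - ∑ p, Γ p k j * Y i p) * T j)
        + (∑ j, ∑ l, V l * Yy i j l * T j)
        + ∑ j, ∑ k, ∑ m, (Nyy i k j - Γ i j k) * u j * Y k m * T m := by
  linear_combination spray_terms_eq i T u M V A Gv N Gx Y Nx Nyy Yx Yy hNyy hV hA
    - lorentz_terms_eq i T u M V N Y Nyy Yx Yy Γ hΓN hV

end JacobiAlgebra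

theorem stmt_15_general (n : ℕ) (W : Set (Pt n)) (hWopen : IsOpen W)
    (G : Fin n → Pt n → ℝ) (hGsmooth : ∀ i, ContDiffOn ℝ (⊤ : ℕ∞) (G i) W)
    (Γ : Fin n → Fin n → Fin n → Pt n → ℝ)
    (hΓN : ∀ z ∈ W, ∀ i j, (∑ k, Γ i j k z * z.2 k) = pdy j (G i) z)
    (Y : Fin n → Fin n → Pt n → ℝ)
    (hYsmooth : ∀ i j, ContDiffOn ℝ (⊤ : ℕ∞) (Y i j) W)
    (ε a b : ℝ)
    (H : ℝ × ℝ → Fin n → ℝ)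
    (hH : ContDiffOn ℝ (⊤ : ℕ∞) H (Set.Ioo (-ε) ε ×ˢ Set.Ioo a b))
    (hmem : ∀ p ∈ Set.Ioo (-ε) ε ×ˢ Set.Ioo a b, PP H p ∈ W)
    (hgeo : ∀ p ∈ Set.Ioo (-ε) ε ×ˢ Set.Ioo a b, ∀ i,
      deriv (fun τ => Tt H i (p.1, τ)) p.2 + 2 * G i (PP H p)
        = ∑ j, Y i j (PP H p) * Tt H j p) :
    ∀ p ∈ Set.Ioo (-ε) ε ×ˢ Set.Ioo a b, ∀ i,
      DT G H (DT G H (Us H)) i p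
        = -(∑ k, Rspray G i k (PP H p) * Us H k p)
          + (∑ j, Y i j (PP H p) * DT G H (Us H) j p)
          + (∑ j, ∑ k, Us H k p * Ydh G Γ Y i j k (PP H p) * Tt H j p)
          + (∑ j, ∑ l, DT G H (Us H) l p * pdy l (Y i j) (PP H p) * Tt H j p)
          + ∑ j, ∑ k, ∑ m,
              Lspray G Γ i j k (PP H p) * Us H j p * Y k m (PP H p) * Tt H m p := by
  intro p hp i
  have hV : IsMagneticVariation W G Y (Set.Ioo (-ε) ε ×ˢ Set.Ioo a b) H :=
    ⟨hWopen, isOpen_Ioo.prod isOpen_Ioo, hGsmooth, hYsmooth, hH, hmem, hgeo⟩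
  have hz : PP H p ∈ W := hmem p hp
  have hNyy : ∀ a b c, pdy c (pdy b (G a)) (PP H p) = pdy b (pdy c (G a)) (PP H p) := fun a _ _ =>
    (((hGsmooth a).contDiffAt (hWopen.mem_nhds hz)).of_le (by norm_cast)).pdy_pdy_comm _ _
  rw [hV.DT_DT_Us hp, hV.derivT_derivS_Tt hp]
  exact magnetic_jacobi_identity i (fun k => Tt H k p) (fun k => Us H k p)
    (fun k => derivS (Tt H k) p) (fun l => DT G H (Us H) l p) (fun k => derivT (Tt H k) p)
    (fun k => G k (PP H p)) (fun i k => pdy k (G i) (PP H p)) (fun i k => pdx k (G i) (PP H p))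
    (fun i j => Y i j (PP H p)) (fun i l k => pdx k (pdy l (G i)) (PP H p))
    (fun i l k => pdy k (pdy l (G i)) (PP H p)) (fun i j k => pdx k (Y i j) (PP H p))
    (fun i j k => pdy k (Y i j) (PP H p)) (fun i j k => Γ i j k (PP H p))
    hNyy (hΓN _ hz) (hV.DT_Us hp) (hV.derivT_Tt hp)

/-- **The Jacobi equation for the magnetic flow of a Finsler metric:** for a
variation through magnetic geodesics, the transverse field `U = ∂H/∂s` satisfies
`D_T D_T U = −R(U) + Y(D_T U) + (∇_{|U}Y)(T) + (∇_{·D_T U}Y)(T) + L(U, Y(T))`. -/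
theorem stmt_15 (n : ℕ) (hn : 1 ≤ n) (W : Set (Pt n)) (hWopen : IsOpen W)
    (hWy : ∀ z ∈ W, z.2 ≠ 0)
    (hWcone : ∀ z ∈ W, ∀ t : ℝ, 0 < t → (z.1, t • z.2) ∈ W)
    (G : Fin n → Pt n → ℝ) (hGsmooth : ∀ i, ContDiffOn ℝ (⊤ : ℕ∞) (G i) W)
    (Γ : Fin n → Fin n → Fin n → Pt n → ℝ)
    (hΓsmooth : ∀ i j k, ContDiffOn ℝ (⊤ : ℕ∞) (Γ i j k) W)
    (hΓsym : ∀ i j k, ∀ z ∈ W, Γ i j k z = Γ i k j z)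
    (hΓN : ∀ z ∈ W, ∀ i j, (∑ k, Γ i j k z * z.2 k) = pdy j (G i) z)
    (Y : Fin n → Fin n → Pt n → ℝ)
    (hYsmooth : ∀ i j, ContDiffOn ℝ (⊤ : ℕ∞) (Y i j) W)
    (ε a b : ℝ) (hε : 0 < ε)
    (H : ℝ × ℝ → Fin n → ℝ)
    (hH : ContDiffOn ℝ (⊤ : ℕ∞) H (Set.Ioo (-ε) ε ×ˢ Set.Ioo a b))
    (hmem : ∀ p ∈ Set.Ioo (-ε) ε ×ˢ Set.Ioo a b, PP H p ∈ W)
    (hgeo : ∀ p ∈ Set.Ioo (-ε) ε ×ˢ Set.Ioo a b, ∀ i,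
      deriv (fun τ => Tt H i (p.1, τ)) p.2 + 2 * G i (PP H p)
        = ∑ j, Y i j (PP H p) * Tt H j p) :
    ∀ p ∈ Set.Ioo (-ε) ε ×ˢ Set.Ioo a b, ∀ i,
      DT G H (DT G H (Us H)) i p
        = -(∑ k, Rspray G i k (PP H p) * Us H k p)
          + (∑ j, Y i j (PP H p) * DT G H (Us H) j p)
          + (∑ j, ∑ k, Us H k p * Ydh G Γ Y i j k (PP H p) * Tt H j p)
          + (∑ j, ∑ l, DT G H (Us H) l p * pdy l (Y i j) (PP H p) * Tt H j p)
          + ∑ j, ∑ k, ∑ m,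
              Lspray G Γ i j k (PP H p) * Us H j p * Y k m (PP H p) * Tt H m p :=
  stmt_15_general n W hWopen G hGsmooth Γ hΓN Y hYsmooth ε a b H hH hmem hgeo

end
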